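/- Let δ > 0, Θ ≥ 0, θ > 0, γ ∈ ℝ, and consider on ℝ × ℝ the product measure μ = γ̄(δ, Θ, θ) ⊗ N(0,1) with coordinates (R, ε). Then the covariance of the random variables √R ε and (ε − γ √R)² under μ equals −2 γ θ (δ + Θ); in particular it is negative whenever γ > 0 (the leverage effect: log-returns and next-day variance noncentrality are negatively correlated). -/

import Mathlib

/-! Under the product measure `R` and `ε` are independent, so every mixed moment factorises.
Expanding `√R ε (ε − γ√R)² = √R ε³ − 2γ R ε² + γ² R^{3/2} ε`, the odd Gaussian moments vanish and
`E[√R ε (ε − γ√R)²] = −2γ E[R] E[ε²] = −2γ E[R]`, while `E[√R ε] = 0` kills the product of the means.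
The mean of `γ̄(δ, Θ, θ)` is the Poisson(`Θ`) average of the gamma means `(δ + k)θ`, that is
`θ(δ + Θ)`; integrability of `R^{3/2}` comes from the second moment, the Poisson average of
`(δ + k)(δ + k + 1)θ²`. -/

open MeasureTheory ProbabilityTheory Real

/-- The noncentral gamma distribution `γ̄(δ, c, θ)` with shape `δ > 0`, noncentrality `c ≥ 0`
and scale `θ > 0`: the Poisson mixture `∑ₖ (e^{−c} cᵏ / k!) • Γ(δ + k, θ)`, where `Γ(a, θ)`
is the gamma distribution with shape `a` and rate `1/θ`. -/
noncomputable def ncGamma (δ c θ : ℝ) : Measure ℝ :=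
  Measure.sum fun k : ℕ =>
    ENNReal.ofReal (Real.exp (-c) * c ^ k / Nat.factorial k) • gammaMeasure (δ + k) θ⁻¹

open scoped NNReal ENNReal Nat

namespace ProbabilityTheory

section Gamma

variable {a r : ℝ}

lemma integral_gammaMeasure {E : Type*} [NormedAddCommGroup E] [NormedSpace ℝ E]
    (ha : 0 < a) (hr : 0 < r) (g : ℝ → E) :
    ∫ x, g x ∂gammaMeasure a r = ∫ x, gammaPDFReal a r x • g x := by
  rw [gammaMeasure, integral_withDensity_eq_integral_toReal_smul (f := gammaPDF a r)
    (measurable_gammaPDFReal a r).ennreal_ofReal (ae_of_all _ fun _ => ENNReal.ofReal_lt_top)]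
  simp only [gammaPDF, ENNReal.toReal_ofReal (gammaPDFReal_nonneg ha hr _)]

lemma integrable_gammaMeasure_iff {E : Type*} [NormedAddCommGroup E] [NormedSpace ℝ E]
    (ha : 0 < a) (hr : 0 < r) {g : ℝ → E} :
    Integrable g (gammaMeasure a r) ↔ Integrable (fun x => gammaPDFReal a r x • g x) := by
  rw [gammaMeasure, integrable_withDensity_iff_integrable_smul' (f := gammaPDF a r)
    (measurable_gammaPDFReal a r).ennreal_ofReal (ae_of_all _ fun _ => ENNReal.ofReal_lt_top)]
  simp only [gammaPDF, ENNReal.toReal_ofReal (gammaPDFReal_nonneg ha hr _)]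

lemma integrable_gammaPDFReal (ha : 0 < a) (hr : 0 < r) : Integrable (gammaPDFReal a r) := by
  have := isProbabilityMeasure_gammaMeasure ha hr
  simpa using (integrable_gammaMeasure_iff ha hr).1 (integrable_const (1 : ℝ))

lemma integral_gammaPDFReal (ha : 0 < a) (hr : 0 < r) : ∫ x, gammaPDFReal a r x = 1 := by
  have := isProbabilityMeasure_gammaMeasure ha hr
  simpa using (integral_gammaMeasure ha hr fun _ => (1 : ℝ)).symm

lemma gammaPDFReal_mul_pow (ha : 0 < a) (hr : 0 < r) (n : ℕ) (x : ℝ) :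
    gammaPDFReal a r x * x ^ n = Gamma (a + n) / Gamma a / r ^ n * gammaPDFReal (a + n) r x := by
  have hΓ : Gamma (a + n) ≠ 0 := (Gamma_pos_of_pos (by positivity)).ne'
  rcases n.eq_zero_or_pos with rfl | hn
  · simp [(Gamma_pos_of_pos ha).ne']
  rcases lt_or_ge x 0 with hx | hx
  · simp [gammaPDFReal, hx.not_ge]
  have hn' : (1 : ℝ) ≤ n := Nat.one_le_cast.2 hn
  simp only [gammaPDFReal, if_pos hx]
  rw [show a + n - 1 = a - 1 + n by ring, rpow_add_natCast' hx (by linarith), rpow_add hr,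
    rpow_natCast]
  field_simp

lemma integrable_pow_gammaMeasure (ha : 0 < a) (hr : 0 < r) (n : ℕ) :
    Integrable (fun x => x ^ n) (gammaMeasure a r) := by
  rw [integrable_gammaMeasure_iff ha hr]
  simp only [smul_eq_mul, gammaPDFReal_mul_pow ha hr]
  exact (integrable_gammaPDFReal (by positivity) hr).const_mul _

lemma integral_pow_gammaMeasure (ha : 0 < a) (hr : 0 < r) (n : ℕ) :
    ∫ x, x ^ n ∂gammaMeasure a r = Gamma (a + n) / Gamma a / r ^ n := by
  simp only [integral_gammaMeasure ha hr, smul_eq_mul, gammaPDFReal_mul_pow ha hr,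
    integral_const_mul, integral_gammaPDFReal (by positivity : 0 < a + n) hr, mul_one]

lemma integral_id_gammaMeasure (ha : 0 < a) (hr : 0 < r) : ∫ x, x ∂gammaMeasure a r = a / r := by
  have := integral_pow_gammaMeasure ha hr 1
  rw [Nat.cast_one, Gamma_add_one ha.ne'] at this
  simpa [(Gamma_pos_of_pos ha).ne'] using this

lemma integral_sq_gammaMeasure (ha : 0 < a) (hr : 0 < r) :
    ∫ x, x ^ 2 ∂gammaMeasure a r = a * (a + 1) / r ^ 2 := by
  rw [integral_pow_gammaMeasure ha hr, Nat.cast_ofNat, show a + 2 = a + 1 + 1 by ring,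
    Gamma_add_one (by positivity), Gamma_add_one ha.ne']
  field_simp [(Gamma_pos_of_pos ha).ne']

lemma ae_nonneg_gammaMeasure : ∀ᵐ x ∂gammaMeasure a r, 0 ≤ x := by
  simp only [ae_iff, not_le]
  change gammaMeasure a r (Set.Iio 0) = 0
  rw [gammaMeasure, withDensity_apply _ measurableSet_Iio]
  exact lintegral_gammaPDF_of_nonpos le_rfl

end Gamma

section Poisson

variable (r : ℝ≥0)

lemma poisson_weight_succ_mul (n : ℕ) :
    exp (-r) * r ^ (n + 1) / (n + 1)! * (n + 1 : ℕ) = r * (exp (-r) * r ^ n / n !) := by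
  rw [Nat.factorial_succ, Nat.cast_mul, pow_succ]
  field_simp

lemma hasSum_poisson_weight_mul_natCast :
    HasSum (fun n : ℕ => exp (-r) * r ^ n / n ! * n) r := by
  rw [← hasSum_nat_add_iff' 1]
  simp only [Finset.range_one, Finset.sum_singleton, CharP.cast_eq_zero, mul_zero, sub_zero]
  simpa only [poisson_weight_succ_mul, mul_one] using (hasSum_one_poissonMeasure r).mul_left (r : ℝ)

lemma integrable_natCast_poissonMeasure : Integrable (fun n : ℕ => (n : ℝ)) Po(r) := by
  rw [integrable_poissonMeasure_iff]
  simpa using (hasSum_poisson_weight_mul_natCast r).summable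

lemma integral_natCast_poissonMeasure : ∫ n, (n : ℝ) ∂Po(r) = r := by
  simpa [integral_poissonMeasure, mul_comm] using (hasSum_poisson_weight_mul_natCast r).tsum_eq

lemma integrable_natCast_sq_poissonMeasure : Integrable (fun n : ℕ => (n : ℝ) ^ 2) Po(r) := by
  rw [integrable_poissonMeasure_iff, ← summable_nat_add_iff 1]
  refine (((hasSum_poisson_weight_mul_natCast r).summable.add
    (hasSum_one_poissonMeasure r).summable).mul_left (r : ℝ)).congr fun n => ?_
  simp only [norm_pow, Real.norm_natCast]
  rw [sq, ← mul_assoc, poisson_weight_succ_mul]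
  push_cast
  ring

end Poisson

instance (v : ℝ≥0) : (gaussianReal 0 v).IsNegInvariant :=
  ⟨by simpa [Measure.neg_def] using gaussianReal_map_neg (μ := 0) (v := v)⟩

lemma integral_pow_eq_zero_of_odd {μ : Measure ℝ} [μ.IsNegInvariant] {n : ℕ} (hn : Odd n) :
    ∫ x, x ^ n ∂μ = 0 := by
  have h := integral_neg_eq_self (fun x : ℝ => x ^ n) μ
  simp only [hn.neg_pow, integral_neg] at h
  linarith

lemma integrable_pow_gaussianReal (μ : ℝ) (v : ℝ≥0) (n : ℕ) :
    Integrable (fun x => x ^ n) (gaussianReal μ v) := by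
  rcases n.eq_zero_or_pos with rfl | hn
  · simp
  refine (integrable_norm_iff (by fun_prop)).1 ?_
  simpa using (memLp_id_gaussianReal (μ := μ) (v := v) n).integrable_norm_pow hn.ne'

lemma integral_sq_gaussianReal (v : ℝ≥0) : ∫ x, x ^ 2 ∂gaussianReal 0 v = v := by
  rw [← variance_of_integral_eq_zero aemeasurable_id' integral_id_gaussianReal,
    variance_fun_id_gaussianReal]

end ProbabilityTheory

lemma sqrt_pow_le_one_add_sq {n : ℕ} (hn : n ≤ 4) (x : ℝ) : √x ^ n ≤ 1 + x ^ 2 := by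
  have hx : √x ^ 4 ≤ x ^ 2 := by
    rcases le_total 0 x with hx | hx
    · rw [show 4 = 2 * 2 by rfl, pow_mul, sq_sqrt hx]
    · simp [sqrt_eq_zero_of_nonpos hx, sq_nonneg]
  rcases le_total (√x) 1 with h | h
  · nlinarith [pow_le_one₀ (sqrt_nonneg x) h (n := n), sq_nonneg x]
  · nlinarith [pow_le_pow_right₀ h hn]

lemma integrable_sqrt_pow_of_integrable_sq {μ : Measure ℝ} [IsFiniteMeasure μ]
    (h : Integrable (fun x => x ^ 2) μ) {n : ℕ} (hn : n ≤ 4) :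
    Integrable (fun x => √x ^ n) μ :=
  ((integrable_const 1).add h).mono' (by fun_prop) <| ae_of_all _ fun x => by
    rw [norm_of_nonneg (by positivity)]
    exact sqrt_pow_le_one_add_sq hn x

section ncGamma

variable {δ θ : ℝ}

lemma integrable_ncGamma {E : Type*} [NormedAddCommGroup E] (r : ℝ≥0) {f : ℝ → E}
    (hf : ∀ k : ℕ, Integrable f (gammaMeasure (δ + k) θ⁻¹))
    (hs : Integrable (fun k : ℕ => ∫ x, ‖f x‖ ∂gammaMeasure (δ + k) θ⁻¹) Po(r)) :
    Integrable f (ncGamma δ r θ) := by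
  refine integrable_sum_measure (fun k => (hf k).smul_measure ENNReal.ofReal_ne_top) ?_
  rw [integrable_poissonMeasure_iff] at hs
  refine hs.congr fun k => ?_
  rw [integral_smul_measure, ENNReal.toReal_ofReal (by positivity), smul_eq_mul,
    norm_of_nonneg (integral_nonneg fun _ => norm_nonneg _)]

lemma integral_ncGamma {E : Type*} [NormedAddCommGroup E] [NormedSpace ℝ E] [FiniteDimensional ℝ E]
    (r : ℝ≥0) {f : ℝ → E} (hf : Integrable f (ncGamma δ r θ)) :
    ∫ x, f x ∂ncGamma δ r θ = ∫ k, ∫ x, f x ∂gammaMeasure (δ + k) θ⁻¹ ∂Po(r) := by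
  rw [ncGamma, integral_sum_measure hf, integral_poissonMeasure]
  congr with k
  rw [integral_smul_measure, ENNReal.toReal_ofReal (by positivity)]

lemma isProbabilityMeasure_ncGamma (hδ : 0 < δ) (hθ : 0 < θ) (r : ℝ≥0) :
    IsProbabilityMeasure (ncGamma δ r θ) := by
  constructor
  have (k : ℕ) := isProbabilityMeasure_gammaMeasure (by positivity : 0 < δ + k) (inv_pos.2 hθ)
  simp only [ncGamma, Measure.sum_apply _ MeasurableSet.univ, Measure.smul_apply, measure_univ,
    smul_eq_mul, mul_one]
  rw [← ENNReal.ofReal_tsum_of_nonneg (fun _ => by positivity)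
    (hasSum_one_poissonMeasure r).summable, (hasSum_one_poissonMeasure r).tsum_eq, ENNReal.ofReal_one]

lemma ae_nonneg_ncGamma {c : ℝ} : ∀ᵐ x ∂ncGamma δ c θ, 0 ≤ x :=
  (Measure.ae_sum_iff' measurableSet_Ici).2 fun _ => Measure.ae_smul_measure ae_nonneg_gammaMeasure _

lemma integrable_id_ncGamma (hδ : 0 < δ) (hθ : 0 < θ) (r : ℝ≥0) :
    Integrable (fun x => x) (ncGamma δ r θ) := by
  have hδk (k : ℕ) : 0 < δ + k := by positivity
  have hint (k : ℕ) := integrable_pow_gammaMeasure (hδk k) (inv_pos.2 hθ) 1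
  simp only [pow_one] at hint
  refine integrable_ncGamma r hint ?_
  refine (((integrable_const δ).add (integrable_natCast_poissonMeasure r)).mul_const θ).congr
    (ae_of_all _ fun k => ?_)
  simp only [Pi.add_apply]
  rw [integral_congr_ae (ae_nonneg_gammaMeasure.mono fun x hx => norm_of_nonneg hx),
    integral_id_gammaMeasure (hδk k) (inv_pos.2 hθ), div_inv_eq_mul]

lemma integral_id_ncGamma (hδ : 0 < δ) (hθ : 0 < θ) (r : ℝ≥0) :
    ∫ x, x ∂ncGamma δ r θ = θ * (δ + r) := by
  have hδk (k : ℕ) : 0 < δ + k := by positivity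
  simp only [integral_ncGamma r (integrable_id_ncGamma hδ hθ r),
    integral_id_gammaMeasure (hδk _) (inv_pos.2 hθ), div_inv_eq_mul]
  rw [integral_mul_const, integral_add (integrable_const δ) (integrable_natCast_poissonMeasure r),
    integral_natCast_poissonMeasure, integral_const, probReal_univ, one_smul]
  ring

lemma integrable_sq_ncGamma (hδ : 0 < δ) (hθ : 0 < θ) (r : ℝ≥0) :
    Integrable (fun x => x ^ 2) (ncGamma δ r θ) := by
  have hδk (k : ℕ) : 0 < δ + k := by positivity
  refine integrable_ncGamma r (fun k => integrable_pow_gammaMeasure (hδk k) (inv_pos.2 hθ) 2) ?_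
  refine ((((integrable_const (δ * (δ + 1))).add
    ((integrable_natCast_poissonMeasure r).const_mul (2 * δ + 1))).add
    (integrable_natCast_sq_poissonMeasure r)).mul_const (θ ^ 2)).congr (ae_of_all _ fun k => ?_)
  simp only [Pi.add_apply, norm_pow, norm_eq_abs, sq_abs]
  rw [integral_sq_gammaMeasure (hδk k) (inv_pos.2 hθ), inv_pow, div_inv_eq_mul]
  ring

end ncGamma

lemma integral_sqrt_mul_mul_sub_sq_prod {ρ ν : Measure ℝ} [SFinite ρ] [SFinite ν] (γ : ℝ)
    (hρ : ∀ᵐ x ∂ρ, 0 ≤ x) (hρ₁ : Integrable (fun x => √x) ρ) (hρ₂ : Integrable (fun x => x) ρ)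
    (hρ₃ : Integrable (fun x => √x ^ 3) ρ) (hν₁ : Integrable (fun y => y) ν)
    (hν₂ : Integrable (fun y => y ^ 2) ν) (hν₃ : Integrable (fun y => y ^ 3) ν)
    (hm₁ : ∫ y, y ∂ν = 0) (hm₃ : ∫ y, y ^ 3 ∂ν = 0) :
    ∫ p, √p.1 * p.2 * (p.2 - γ * √p.1) ^ 2 ∂ρ.prod ν = -2 * γ * (∫ x, x ∂ρ) * ∫ y, y ^ 2 ∂ν := by
  have hsq : ∫ x, √x ^ 2 ∂ρ = ∫ x, x ∂ρ := integral_congr_ae (hρ.mono fun x hx => sq_sqrt hx)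
  have hρ₂' : Integrable (fun x => √x ^ 2) ρ := hρ₂.congr (hρ.mono fun x hx => (sq_sqrt hx).symm)
  have hA := hρ₁.mul_prod hν₃
  have hB := (hρ₂'.const_mul (-2 * γ)).mul_prod hν₂
  have hC := (hρ₃.const_mul (γ ^ 2)).mul_prod hν₁
  calc ∫ p, √p.1 * p.2 * (p.2 - γ * √p.1) ^ 2 ∂ρ.prod ν
      = ∫ p, (√p.1 * p.2 ^ 3 + (-2 * γ * √p.1 ^ 2 * p.2 ^ 2 + γ ^ 2 * √p.1 ^ 3 * p.2)) ∂ρ.prod ν :=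
        integral_congr_ae (ae_of_all _ fun p => by ring)
    _ = (∫ x, √x ∂ρ) * (∫ y, y ^ 3 ∂ν) + ((∫ x, -2 * γ * √x ^ 2 ∂ρ) * (∫ y, y ^ 2 ∂ν)
          + (∫ x, γ ^ 2 * √x ^ 3 ∂ρ) * ∫ y, y ∂ν) := by
        rw [integral_add hA (by exact hB.add hC), integral_add hB hC,
          integral_prod_mul (fun x => √x) (fun y => y ^ 3),
          integral_prod_mul (fun x => -2 * γ * √x ^ 2) (fun y => y ^ 2),
          integral_prod_mul (fun x => γ ^ 2 * √x ^ 3) (fun y => y)]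
    _ = -2 * γ * (∫ x, x ∂ρ) * ∫ y, y ^ 2 ∂ν := by
        rw [hm₁, hm₃, integral_const_mul, hsq]
        ring

/-- The leverage effect: on `μ = γ̄(δ, Θ, θ) ⊗ N(0,1)` with coordinates
`(R, ε)`, the covariance of `√R ε` and `(ε − γ√R)²` equals `−2γθ(δ + Θ)`; in particular it
is negative whenever `γ > 0`. -/
theorem lharg_leverage_covariance (δ Θ θ γ : ℝ)
    (hδ : 0 < δ) (hΘ : 0 ≤ Θ) (hθ : 0 < θ) :
    let μ : Measure (ℝ × ℝ) := (ncGamma δ Θ θ).prod (gaussianReal 0 1)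
    let U : ℝ × ℝ → ℝ := fun pt => Real.sqrt pt.1 * pt.2
    let V : ℝ × ℝ → ℝ := fun pt => (pt.2 - γ * Real.sqrt pt.1) ^ 2
    let cov : ℝ := (∫ pt, U pt * V pt ∂μ) - (∫ pt, U pt ∂μ) * (∫ pt, V pt ∂μ)
    cov = -2 * γ * θ * (δ + Θ) ∧ (0 < γ → cov < 0) := by
  intro μ U V cov
  lift Θ to ℝ≥0 using hΘ
  have := isProbabilityMeasure_ncGamma hδ hθ Θ
  have hsq := integrable_sq_ncGamma hδ hθ Θ
  have hm₁ : ∫ y, y ∂gaussianReal 0 1 = 0 := integral_id_gaussianReal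
  have hU : ∫ pt, U pt ∂μ = 0 := by
    simp only [U, μ, integral_prod_mul (fun x => √x) (fun y => y), hm₁, mul_zero]
  have hcov : cov = -2 * γ * θ * (δ + Θ) := by
    have h := integral_sqrt_mul_mul_sub_sq_prod γ ae_nonneg_ncGamma
      (by simpa using integrable_sqrt_pow_of_integrable_sq hsq (n := 1) (by norm_num))
      (integrable_id_ncGamma hδ hθ Θ) (integrable_sqrt_pow_of_integrable_sq hsq (by norm_num))
      (by simpa using integrable_pow_gaussianReal 0 1 1) (integrable_pow_gaussianReal 0 1 2)
      (integrable_pow_gaussianReal 0 1 3) hm₁ (integral_pow_eq_zero_of_odd (by decide))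
    rw [integral_id_ncGamma hδ hθ Θ, integral_sq_gaussianReal] at h
    simp only [cov, hU, zero_mul, sub_zero, U, V, μ, h]
    push_cast
    ring
  refine ⟨hcov, fun hγ => ?_⟩
  have : 0 < γ * θ * (δ + Θ) := by positivity
  linarith
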